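/- arXiv:2007.05773 — 5 statements merged into one kernel-verified Lean document; each statement's English description precedes it below -/
import Mathlib

section
/- Let ξ be a skew-Hermitian operator on a finite-dimensional complex inner product space V, and let μ(v) := (1/2)ω(ξv, v) + ⟨θ,ξ⟩ where ω = Im h and θ ∈ ℝ is a constant. Then the function t ↦ ⟨μ(exp(√(-1)tξ)v), ξ⟩ is non-decreasing in t, and in fact its derivative equals ‖ξ_{v(t)}‖² ≥ 0 where v(t) = exp(√(-1)tξ)v. -/
open scoped InnerProductSpace

theorem hasDerivAt_exp_ofReal_smul_apply {V : Type*} [NormedAddCommGroup V] [NormedSpace ℂ V]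
    [CompleteSpace V] (A : V →L[ℂ] V) (v : V) (t : ℝ) :
    HasDerivAt (fun s : ℝ => NormedSpace.exp ((s : ℂ) • A) v)
      (A (NormedSpace.exp ((t : ℂ) • A) v)) t := by
  simp only [Complex.coe_smul]
  exact ((ContinuousLinearMap.apply ℂ V v).restrictScalars ℝ).hasFDerivAt.comp_hasDerivAt t
    (hasDerivAt_exp_smul_const' A t)

section SkewHermitian

variable {V : Type*} [NormedAddCommGroup V] [InnerProductSpace ℂ V] {ξ : V →L[ℂ] V}

/-- Skewness moves `ξ` across in the second term, which then equals the first, `√-1 ‖ξ w‖²`. -/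
theorem im_inner_add_inner_I_smul_eq (hskew : ∀ x y : V, ⟪ξ x, y⟫_ℂ = -⟪x, ξ y⟫_ℂ) (w : V) :
    (⟪ξ w, Complex.I • ξ w⟫_ℂ + ⟪ξ (Complex.I • ξ w), w⟫_ℂ).im = 2 * ‖ξ w‖ ^ 2 := by
  rw [map_smul, inner_smul_right, inner_smul_left, hskew (ξ w) w, inner_self_eq_norm_sq_to_K]
  simp [Complex.conj_I, ← Complex.ofReal_pow, two_mul]

theorem HasDerivAt.im_inner_apply_self (hskew : ∀ x y : V, ⟪ξ x, y⟫_ℂ = -⟪x, ξ y⟫_ℂ)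
    {γ : ℝ → V} {t : ℝ} (hγ : HasDerivAt γ (Complex.I • ξ (γ t)) t) :
    HasDerivAt (fun s => (⟪ξ (γ s), γ s⟫_ℂ).im) (2 * ‖ξ (γ t)‖ ^ 2) t := by
  have hξγ := (ξ.restrictScalars ℝ).hasFDerivAt.comp_hasDerivAt t hγ
  have him := Complex.imCLM.hasFDerivAt.comp_hasDerivAt t (hξγ.inner ℂ hγ)
  rw [← im_inner_add_inner_I_smul_eq hskew]
  exact him

end SkewHermitian

theorem statement2
    (V : Type*) [NormedAddCommGroup V] [InnerProductSpace ℂ V] [FiniteDimensional ℂ V]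
    (ξ : V →L[ℂ] V)
    -- ξ is skew-Hermitian:
    (hskew : ∀ x y : V, ⟪ξ x, y⟫_ℂ = - ⟪x, ξ y⟫_ℂ)
    (θ : ℝ) (v : V)
    -- ω = Im h :
    (ω : V → V → ℝ) (hω : ∀ x y, ω x y = (⟪x, y⟫_ℂ).im)
    -- the flow v(t) = exp(√-1 t ξ) v :
    (flow : ℝ → V)
    (hflow : ∀ t : ℝ, flow t = NormedSpace.exp ((t : ℂ) • (Complex.I • ξ)) v)
    -- μ evaluated at ξ along the flow:
    (f : ℝ → ℝ) (hf : ∀ t, f t = (1/2 : ℝ) * ω (ξ (flow t)) (flow t) + θ) :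
    (∀ t : ℝ, HasDerivAt f (‖ξ (flow t)‖ ^ 2) t)
    ∧ (∀ t : ℝ, 0 ≤ ‖ξ (flow t)‖ ^ 2)
    ∧ Monotone f := by
  have hf_eq : f = fun t => (1/2 : ℝ) * (⟪ξ (flow t), flow t⟫_ℂ).im + θ := by
    funext t
    rw [hf, hω]
  have hvel (t : ℝ) : HasDerivAt flow (Complex.I • ξ (flow t)) t := by
    rw [funext hflow]
    exact hasDerivAt_exp_ofReal_smul_apply _ v t
  have hderiv (t : ℝ) : HasDerivAt f (‖ξ (flow t)‖ ^ 2) t := by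
    rw [hf_eq]
    exact ((((hvel t).im_inner_apply_self hskew).const_mul (1/2 : ℝ)).add_const θ).congr_deriv
      (by ring)
  exact ⟨hderiv, fun t => by positivity,
    monotone_of_hasDerivAt_nonneg hderiv fun t => by positivity⟩
end

section
/- Let U = V ⊕ W be a direct sum of two unitary representations of a compact group C, p : U → V the projection, μ_V a fixed moment map on V and μ_U its unique extension to U. Then the preimage under p of the set of stable (resp. semistable) points of V is contained in the set of stable (resp. semistable) points of U. -/
/-!
Write `u = v + w` with `v ∈ V`, `w ∈ W`. The flow `exp(√-1 t ξ)` preserves the splitting and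
the pairing `⟨μ(·), ξ⟩` is additive over it, so the weight of `u` is at least the weight of `v`
plus the `liminf` of the `W`-contribution `q(t) = ½ ⟪A w_t, w_t⟫`, where `A = √-1 ρ(ξ)` is
Hermitian and `w_t = exp(t A) w`. This contribution is nondecreasing (`q' = ‖A w_t‖²`) and
cannot stay below a negative constant, because `4 q` is the derivative of `‖w_t‖² ≥ 0`.
So passing from `V` to `U` can only raise weights, which gives both inclusions.
-/

open scoped InnerProductSpace
open Filter

namespace Stmt5

/-- The μ-weight of `(v, ξ)` for a unitary representation with infinitesimal
action `ρ` and moment-map constant `θ`. -/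
noncomputable def weight
    (E : Type*) [NormedAddCommGroup E] [InnerProductSpace ℂ E]
    (𝔠 : Type*) [NormedAddCommGroup 𝔠] [InnerProductSpace ℝ 𝔠]
    (ρ : 𝔠 →ₗ[ℝ] (E →L[ℂ] E)) (θ : 𝔠 →ₗ[ℝ] ℝ) (ξ : 𝔠) (v : E) : EReal :=
  Filter.limsup (fun t : ℝ =>
    (((1/2 : ℝ) * (⟪ρ ξ (NormedSpace.exp ((t : ℂ) • (Complex.I • ρ ξ)) v),
        NormedSpace.exp ((t : ℂ) • (Complex.I • ρ ξ)) v⟫_ℂ).im + θ ξ : ℝ) : EReal)) atTop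

/-- Hilbert–Mumford: stable iff all μ-weights at `ξ ≠ 0` are positive. -/
noncomputable def IsStable
    (E : Type*) [NormedAddCommGroup E] [InnerProductSpace ℂ E]
    (𝔠 : Type*) [NormedAddCommGroup 𝔠] [InnerProductSpace ℝ 𝔠]
    (ρ : 𝔠 →ₗ[ℝ] (E →L[ℂ] E)) (θ : 𝔠 →ₗ[ℝ] ℝ) (v : E) : Prop :=
  ∀ ξ : 𝔠, ξ ≠ 0 → 0 < weight E 𝔠 ρ θ ξ v

/-- Hilbert–Mumford: semistable iff all μ-weights at `ξ ≠ 0` are nonnegative. -/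
noncomputable def IsSemistable
    (E : Type*) [NormedAddCommGroup E] [InnerProductSpace ℂ E]
    (𝔠 : Type*) [NormedAddCommGroup 𝔠] [InnerProductSpace ℝ 𝔠]
    (ρ : 𝔠 →ₗ[ℝ] (E →L[ℂ] E)) (θ : 𝔠 →ₗ[ℝ] ℝ) (v : E) : Prop :=
  ∀ ξ : 𝔠, ξ ≠ 0 → 0 ≤ weight E 𝔠 ρ θ ξ v

end Stmt5

theorem exists_lt_of_hasDerivAt_of_nonneg {g g' : ℝ → ℝ} (hg : ∀ t, HasDerivAt g (g' t) t)
    (hg0 : ∀ t, 0 ≤ g t) {r : ℝ} (hr : r < 0) : ∃ t, r < g' t := by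
  by_contra! h
  set T := (g 0 + 1) / -r with hT
  have hT0 : 0 ≤ T := div_nonneg (by linarith [hg0 0]) (by linarith)
  have hrT : r * (T - 0) = -(g 0 + 1) := by
    rw [sub_zero, hT, div_neg, mul_neg, mul_div_cancel₀ _ hr.ne]
  have hdecr := image_sub_le_mul_sub_of_deriv_le (fun t => (hg t).differentiableAt)
    (fun t => (hg t).deriv ▸ h t) hT0
  linarith [hg0 T]

theorem le_liminf_coe_of_monotone {q : ℝ → ℝ} (hq : Monotone q) {a : ℝ}
    (h : ∀ r < a, ∃ t, r < q t) : (a : EReal) ≤ liminf (fun t => (q t : EReal)) atTop := by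
  have hmono : Monotone fun t => (q t : EReal) :=
    fun _ _ hst => EReal.coe_le_coe_iff.mpr (hq hst)
  rw [(tendsto_atTop_iSup hmono).liminf_eq]
  refine le_of_forall_lt fun c hc => ?_
  obtain ⟨r, hcr, hra⟩ := EReal.exists_between_coe_real hc
  obtain ⟨t, ht⟩ := h r (EReal.coe_lt_coe_iff.mp hra)
  exact hcr.trans <|
    (EReal.coe_lt_coe_iff.mpr ht).trans_le (le_iSup (fun t => (q t : EReal)) t)

theorem exp_apply_map {𝕜 E F : Type*} [RCLike 𝕜]
    [NormedAddCommGroup E] [NormedSpace 𝕜 E] [CompleteSpace E]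
    [NormedAddCommGroup F] [NormedSpace 𝕜 F] [CompleteSpace F]
    (j : E →L[𝕜] F) {A : E →L[𝕜] E} {B : F →L[𝕜] F} (h : ∀ x, B (j x) = j (A x)) (x : E) :
    NormedSpace.exp B (j x) = j (NormedSpace.exp A x) := by
  have hpow : ∀ n y, (B ^ n) (j y) = j ((A ^ n) y) := by
    intro n
    induction n with
    | zero => simp
    | succ n ih => intro y; simp [pow_succ, h, ih]
  have hB := (ContinuousLinearMap.apply 𝕜 F (j x)).hasSum
    (NormedSpace.exp_series_hasSum_exp' (𝕂 := 𝕜) B)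
  have hA := (j.comp (ContinuousLinearMap.apply 𝕜 E x)).hasSum
    (NormedSpace.exp_series_hasSum_exp' (𝕂 := 𝕜) A)
  simp only [ContinuousLinearMap.apply_apply, ContinuousLinearMap.comp_apply,
    map_smul, hpow] at hA hB
  exact hB.unique hA

namespace Stmt5

open RCLike

section Pairing

variable {E : Type*} [NormedAddCommGroup E] [InnerProductSpace ℂ E]

noncomputable def flow (A : E →L[ℂ] E) (t : ℝ) (x : E) : E :=
  NormedSpace.exp ((t : ℂ) • A) x

noncomputable def momentPairing (R : E →L[ℂ] E) (x : E) : ℝ :=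
  (1 / 2) * (⟪R x, x⟫_ℂ).im

theorem weight_eq_limsup {𝔠 : Type*} [NormedAddCommGroup 𝔠] [InnerProductSpace ℝ 𝔠]
    (ρ : 𝔠 →ₗ[ℝ] (E →L[ℂ] E)) (θ : 𝔠 →ₗ[ℝ] ℝ) (ξ : 𝔠) (v : E) :
    weight E 𝔠 ρ θ ξ v = limsup (fun t : ℝ =>
      ((momentPairing (ρ ξ) (flow (Complex.I • ρ ξ) t v) + θ ξ : ℝ) : EReal)) atTop :=
  rfl

theorem momentPairing_eq_re_inner (R : E →L[ℂ] E) (x : E) :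
    momentPairing R x = (1 / 2) * re ⟪(Complex.I • R) x, x⟫_ℂ := by
  simp [momentPairing]

theorem isSymmetric_I_smul {R : E →L[ℂ] E} (hR : ∀ x y, ⟪R x, y⟫_ℂ = -⟪x, R y⟫_ℂ) :
    ((Complex.I • R : E →L[ℂ] E) : E →ₗ[ℂ] E).IsSymmetric := by
  intro x y
  simp [inner_smul_left, inner_smul_right, hR]

end Pairing

section Flow

variable {E F : Type*} [NormedAddCommGroup E] [InnerProductSpace ℂ E] [CompleteSpace E]
  [NormedAddCommGroup F] [InnerProductSpace ℂ F] [CompleteSpace F]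

theorem flow_map (j : E →L[ℂ] F) {A : E →L[ℂ] E} {B : F →L[ℂ] F}
    (h : ∀ x, B (j x) = j (A x)) (t : ℝ) (x : E) : flow B t (j x) = j (flow A t x) :=
  exp_apply_map j (fun y => by simp only [smul_apply, h, map_smul]) x

theorem hasDerivAt_flow (A : E →L[ℂ] E) (x : E) (t : ℝ) :
    HasDerivAt (fun s => flow A s x) (A (flow A t x)) t := by
  have hexp : HasDerivAt (fun s : ℝ => NormedSpace.exp (s • A))
      (A * NormedSpace.exp (t • A)) t :=
    hasDerivAt_exp_smul_const' A t
  simp only [← Complex.coe_smul] at hexp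
  exact ((ContinuousLinearMap.apply ℂ E x).restrictScalars ℝ).hasFDerivAt.comp_hasDerivAt
    t hexp

theorem hasDerivAt_re_inner_flow (A B : E →L[ℂ] E) (x : E) (t : ℝ) :
    HasDerivAt (fun s => re ⟪B (flow A s x), flow A s x⟫_ℂ)
      (re ⟪B (flow A t x), A (flow A t x)⟫_ℂ + re ⟪B (A (flow A t x)), flow A t x⟫_ℂ) t := by
  have hB := (B.restrictScalars ℝ).hasFDerivAt.comp_hasDerivAt t (hasDerivAt_flow A x t)
  have := Complex.reCLM.hasFDerivAt.comp_hasDerivAt t (hB.inner ℂ (hasDerivAt_flow A x t))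
  simpa [Function.comp_def] using this

section Symmetric

variable {A : E →L[ℂ] E} (hA : (A : E →ₗ[ℂ] E).IsSymmetric) (x : E)
include hA

theorem monotone_re_inner_flow : Monotone fun t => re ⟪A (flow A t x), flow A t x⟫_ℂ := by
  refine monotone_of_hasDerivAt_nonneg (fun t => hasDerivAt_re_inner_flow A A x t) fun t => ?_
  have hsymm : ⟪A (A (flow A t x)), flow A t x⟫_ℂ = ⟪A (flow A t x), A (flow A t x)⟫_ℂ :=
    hA _ _
  rw [hsymm]
  exact add_nonneg inner_self_nonneg inner_self_nonneg

theorem exists_lt_re_inner_flow {r : ℝ} (hr : r < 0) :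
    ∃ t, r < re ⟪A (flow A t x), flow A t x⟫_ℂ := by
  have hderiv : ∀ t, HasDerivAt (fun s => re ⟪flow A s x, flow A s x⟫_ℂ)
      (2 * re ⟪A (flow A t x), flow A t x⟫_ℂ) t := fun t => by
    have hsymm : ⟪flow A t x, A (flow A t x)⟫_ℂ = ⟪A (flow A t x), flow A t x⟫_ℂ :=
      (hA _ _).symm
    simpa [hsymm, two_mul] using hasDerivAt_re_inner_flow A 1 x t
  obtain ⟨t, ht⟩ := exists_lt_of_hasDerivAt_of_nonneg hderiv (fun _ => inner_self_nonneg)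
    (by linarith : 2 * r < 0)
  exact ⟨t, by linarith⟩

end Symmetric

theorem zero_le_liminf_momentPairing_flow {R : E →L[ℂ] E}
    (hR : ∀ x y, ⟪R x, y⟫_ℂ = -⟪x, R y⟫_ℂ) (x : E) :
    0 ≤ liminf (fun t => (momentPairing R (flow (Complex.I • R) t x) : EReal)) atTop := by
  have hA := isSymmetric_I_smul hR
  simp only [momentPairing_eq_re_inner]
  rw [← EReal.coe_zero]
  refine le_liminf_coe_of_monotone
    ((monotone_re_inner_flow hA x).const_mul (by norm_num)) fun r hr => ?_
  obtain ⟨t, ht⟩ := exists_lt_re_inner_flow hA x (by linarith : 2 * r < 0)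
  exact ⟨t, by linarith⟩

end Flow

section OrthogonalSum

variable {V W U : Type*}
  [NormedAddCommGroup V] [InnerProductSpace ℂ V]
  [NormedAddCommGroup W] [InnerProductSpace ℂ W]
  [NormedAddCommGroup U] [InnerProductSpace ℂ U]
  (iV : V →ₗᵢ[ℂ] U) (iW : W →ₗᵢ[ℂ] U)
  {RV : V →L[ℂ] V} {RW : W →L[ℂ] W} {RU : U →L[ℂ] U}
  (hV : ∀ v, RU (iV v) = iV (RV v)) (hW : ∀ w, RU (iW w) = iW (RW w))
include hV hW

theorem momentPairing_add (horth : ∀ v w, ⟪iV v, iW w⟫_ℂ = 0) (a : V) (b : W) :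
    momentPairing RU (iV a + iW b) = momentPairing RV a + momentPairing RW b := by
  have horth' : ⟪iW (RW b), iV a⟫_ℂ = 0 := by rw [← inner_conj_symm, horth, map_zero]
  simp only [momentPairing, map_add, hV, hW, inner_add_left, inner_add_right, horth, horth',
    LinearIsometry.inner_map_map, add_zero, zero_add, Complex.add_im]
  ring

variable [CompleteSpace V] [CompleteSpace W] [CompleteSpace U]

theorem flow_add (t : ℝ) (a : V) (b : W) :
    flow (Complex.I • RU) t (iV a + iW b)
      = iV (flow (Complex.I • RV) t a) + iW (flow (Complex.I • RW) t b) :=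
  (map_add (NormedSpace.exp _) _ _).trans <| congrArg₂ (· + ·)
    (flow_map iV.toContinuousLinearMap (fun v => by simp [hV]) t a)
    (flow_map iW.toContinuousLinearMap (fun w => by simp [hW]) t b)

end OrthogonalSum

theorem weight_le_weight_add {V W U 𝔠 : Type*}
    [NormedAddCommGroup V] [InnerProductSpace ℂ V] [CompleteSpace V]
    [NormedAddCommGroup W] [InnerProductSpace ℂ W] [CompleteSpace W]
    [NormedAddCommGroup U] [InnerProductSpace ℂ U] [CompleteSpace U]
    [NormedAddCommGroup 𝔠] [InnerProductSpace ℝ 𝔠]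
    (iV : V →ₗᵢ[ℂ] U) (iW : W →ₗᵢ[ℂ] U) (horth : ∀ v w, ⟪iV v, iW w⟫_ℂ = 0)
    {ρV : 𝔠 →ₗ[ℝ] (V →L[ℂ] V)} {ρW : 𝔠 →ₗ[ℝ] (W →L[ℂ] W)} {ρU : 𝔠 →ₗ[ℝ] (U →L[ℂ] U)}
    (hskewU : ∀ ξ x y, ⟪ρU ξ x, y⟫_ℂ = -⟪x, ρU ξ y⟫_ℂ)
    (hρV : ∀ ξ v, ρU ξ (iV v) = iV (ρV ξ v)) (hρW : ∀ ξ w, ρU ξ (iW w) = iW (ρW ξ w))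
    (θ : 𝔠 →ₗ[ℝ] ℝ) (ξ : 𝔠) (a : V) (b : W) :
    weight V 𝔠 ρV θ ξ a ≤ weight U 𝔠 ρU θ ξ (iV a + iW b) := by
  have hskewW : ∀ x y, ⟪ρW ξ x, y⟫_ℂ = -⟪x, ρW ξ y⟫_ℂ := fun x y => by
    rw [← iW.inner_map_map, ← hρW, hskewU, hρW, iW.inner_map_map]
  set f : ℝ → EReal := fun t =>
    ((momentPairing (ρV ξ) (flow (Complex.I • ρV ξ) t a) + θ ξ : ℝ) : EReal)
  set g : ℝ → EReal := fun t =>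
    (momentPairing (ρW ξ) (flow (Complex.I • ρW ξ) t b) : EReal)
  have hU : weight U 𝔠 ρU θ ξ (iV a + iW b) = limsup (f + g) atTop := by
    rw [weight_eq_limsup]
    congr 1
    funext t
    rw [flow_add iV iW (hρV ξ) (hρW ξ), momentPairing_add iV iW (hρV ξ) (hρW ξ) horth]
    simp only [f, g, Pi.add_apply, ← EReal.coe_add]
    ring_nf
  calc weight V 𝔠 ρV θ ξ a = limsup f atTop + 0 := (add_zero _).symm
    _ ≤ limsup f atTop + liminf g atTop :=
      add_le_add_right (zero_le_liminf_momentPairing_flow hskewW b) _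
    _ ≤ weight U 𝔠 ρU θ ξ (iV a + iW b) := hU ▸ EReal.le_limsup_add

end Stmt5

theorem statement5_general
    (V W U : Type*)
    [NormedAddCommGroup V] [InnerProductSpace ℂ V] [FiniteDimensional ℂ V]
    [NormedAddCommGroup W] [InnerProductSpace ℂ W] [FiniteDimensional ℂ W]
    [NormedAddCommGroup U] [InnerProductSpace ℂ U] [FiniteDimensional ℂ U]
    (𝔠 : Type*) [NormedAddCommGroup 𝔠] [InnerProductSpace ℝ 𝔠]
    -- U = V ⊕ W as an orthogonal direct sum:
    (iV : V →ₗᵢ[ℂ] U) (iW : W →ₗᵢ[ℂ] U)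
    (horth : ∀ (v : V) (w : W), ⟪iV v, iW w⟫_ℂ = 0)
    (hspan : LinearMap.range iV.toLinearMap ⊔ LinearMap.range iW.toLinearMap = ⊤)
    -- the projection p : U → V:
    (p : U →ₗ[ℂ] V) (hpV : ∀ v : V, p (iV v) = v) (hpW : ∀ w : W, p (iW w) = 0)
    -- unitary representations and skew-Hermitian infinitesimal actions:
    (ρV : 𝔠 →ₗ[ℝ] (V →L[ℂ] V)) (ρW : 𝔠 →ₗ[ℝ] (W →L[ℂ] W)) (ρU : 𝔠 →ₗ[ℝ] (U →L[ℂ] U))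
    (hskewU : ∀ (ξ : 𝔠) (x y : U), ⟪ρU ξ x, y⟫_ℂ = - ⟪x, ρU ξ y⟫_ℂ)
    (hρV : ∀ (ξ : 𝔠) (v : V), ρU ξ (iV v) = iV (ρV ξ v))
    (hρW : ∀ (ξ : 𝔠) (w : W), ρU ξ (iW w) = iW (ρW ξ w))
    -- the fixed moment-map constant θ of μ_V (and of its unique extension μ_U):
    (θ : 𝔠 →ₗ[ℝ] ℝ) :
    (p ⁻¹' { v : V | Stmt5.IsStable V 𝔠 ρV θ v } ⊆ { u : U | Stmt5.IsStable U 𝔠 ρU θ u })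
    ∧ (p ⁻¹' { v : V | Stmt5.IsSemistable V 𝔠 ρV θ v }
        ⊆ { u : U | Stmt5.IsSemistable U 𝔠 ρU θ u }) := by
  have hweight : ∀ u ξ, Stmt5.weight V 𝔠 ρV θ ξ (p u) ≤ Stmt5.weight U 𝔠 ρU θ ξ u := by
    intro u ξ
    obtain ⟨_, ⟨a, rfl⟩, _, ⟨b, rfl⟩, rfl⟩ :=
      Submodule.mem_sup.mp (hspan ▸ Submodule.mem_top : u ∈ _)
    simpa [hpV, hpW] using
      Stmt5.weight_le_weight_add iV iW horth hskewU hρV hρW θ ξ a b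
  exact ⟨fun u hu ξ hξ => (hu ξ hξ).trans_le (hweight u ξ),
    fun u hu ξ hξ => (hu ξ hξ).trans (hweight u ξ)⟩

theorem statement5
    (V W U : Type*)
    [NormedAddCommGroup V] [InnerProductSpace ℂ V] [FiniteDimensional ℂ V]
    [NormedAddCommGroup W] [InnerProductSpace ℂ W] [FiniteDimensional ℂ W]
    [NormedAddCommGroup U] [InnerProductSpace ℂ U] [FiniteDimensional ℂ U]
    (𝔠 : Type*) [NormedAddCommGroup 𝔠] [InnerProductSpace ℝ 𝔠] [FiniteDimensional ℝ 𝔠]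
    (C : Type*) [Group C] [TopologicalSpace C] [CompactSpace C]
    -- U = V ⊕ W as an orthogonal direct sum:
    (iV : V →ₗᵢ[ℂ] U) (iW : W →ₗᵢ[ℂ] U)
    (horth : ∀ (v : V) (w : W), ⟪iV v, iW w⟫_ℂ = 0)
    (hspan : LinearMap.range iV.toLinearMap ⊔ LinearMap.range iW.toLinearMap = ⊤)
    -- the projection p : U → V:
    (p : U →ₗ[ℂ] V) (hpV : ∀ v : V, p (iV v) = v) (hpW : ∀ w : W, p (iW w) = 0)
    -- unitary representations and skew-Hermitian infinitesimal actions: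
    (πV : C →* (V ≃ₗᵢ[ℂ] V)) (πW : C →* (W ≃ₗᵢ[ℂ] W)) (πU : C →* (U ≃ₗᵢ[ℂ] U))
    (ρV : 𝔠 →ₗ[ℝ] (V →L[ℂ] V)) (ρW : 𝔠 →ₗ[ℝ] (W →L[ℂ] W)) (ρU : 𝔠 →ₗ[ℝ] (U →L[ℂ] U))
    (hskewU : ∀ (ξ : 𝔠) (x y : U), ⟪ρU ξ x, y⟫_ℂ = - ⟪x, ρU ξ y⟫_ℂ)
    (hπV : ∀ (c : C) (v : V), πU c (iV v) = iV (πV c v))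
    (hπW : ∀ (c : C) (w : W), πU c (iW w) = iW (πW c w))
    (hρV : ∀ (ξ : 𝔠) (v : V), ρU ξ (iV v) = iV (ρV ξ v))
    (hρW : ∀ (ξ : 𝔠) (w : W), ρU ξ (iW w) = iW (ρW ξ w))
    -- the fixed moment-map constant θ of μ_V (and of its unique extension μ_U):
    (θ : 𝔠 →ₗ[ℝ] ℝ) :
    (p ⁻¹' { v : V | Stmt5.IsStable V 𝔠 ρV θ v } ⊆ { u : U | Stmt5.IsStable U 𝔠 ρU θ u })
    ∧ (p ⁻¹' { v : V | Stmt5.IsSemistable V 𝔠 ρV θ v }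
        ⊆ { u : U | Stmt5.IsSemistable U 𝔠 ρU θ u }) :=
  statement5_general V W U 𝔠 iV iW horth hspan p hpV hpW ρV ρW ρU hskewU hρV hρW θ
end

section
/- Let V be a complex Hermitian vector space with a unitary C-action, X = V_ℝ ⊕ V_ℝ ≅ T*V with quaternionic complex structures I(x,y)=(Ix,-Iy) and J(x,y)=(-y,x). For ξ ∈ 𝔠 acting diagonally on X and (x,y) ∈ X decomposed into ξ-eigencomponents x = Σx_i, y = Σy_i with eigenvalues √(-1)λ_i, the curve (x(t),y(t)) = exp(tJξ)(x,y) satisfies ⟨ξ x(t), y(t)⟩ = Σ_i λ_i [ (1/2) sinh(2tλ_i)(‖x_i‖² + ‖y_i‖²) + cosh(2tλ_i) ω(x_i,y_i) ], and the limit of this expression as t→∞ is always ≥ 0. -/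
/-!
On the `i`-th eigencomponent, `exp (t J ξ)` is a hyperbolic rotation by `t λ_i` mixing `x_i`
with `I y_i` and `y_i` with `I x_i`; since `ξ` acts there by `√-1 λ_i` and the components are
orthogonal, `⟨ξ x(t), y(t)⟩` splits into one term per eigenvalue, computed with the
double-angle formulas. In exponential form the `i`-th term is
`P_i e^{2|λ_i| t} + Q_i e^{-2|λ_i| t}`, and `P_i ≥ 0` because `|ω(x_i, y_i)| ≤ ‖x_i‖ ‖y_i‖`.
Hence every term tends to `0` or to `+∞`, and so does the sum.
-/

open scoped InnerProductSpace
open Filter Topology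

theorem inner_sum_sum_of_ne {𝕜 E ι : Type*} [RCLike 𝕜] [NormedAddCommGroup E]
    [InnerProductSpace 𝕜 E] (s : Finset ι) (u v : ι → E)
    (h : ∀ i ∈ s, ∀ j ∈ s, i ≠ j → ⟪u i, v j⟫_𝕜 = 0) :
    ⟪∑ i ∈ s, u i, ∑ j ∈ s, v j⟫_𝕜 = ∑ i ∈ s, ⟪u i, v i⟫_𝕜 := by
  rw [sum_inner]
  refine Finset.sum_congr rfl fun i hi => ?_
  rw [inner_sum, Finset.sum_eq_single_of_mem i hi fun j hj hji => h i hi j hj hji.symm]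

theorem EReal.tendsto_coe_sum_of_nonneg {ι α : Type*} {l : Filter α} (s : Finset ι)
    (f : ι → α → ℝ) (L : ι → EReal) (hL : ∀ i ∈ s, 0 ≤ L i)
    (hf : ∀ i ∈ s, Tendsto (fun t => (f i t : EReal)) l (𝓝 (L i))) :
    Tendsto (fun t => ((∑ i ∈ s, f i t : ℝ) : EReal)) l (𝓝 (∑ i ∈ s, L i)) := by
  classical
  induction s using Finset.induction_on with
  | empty => simpa using tendsto_const_nhds
  | insert a s ha ih =>
    simp only [Finset.sum_insert ha, EReal.coe_add]
    have hLa := hL a (Finset.mem_insert_self a s)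
    have hLs : 0 ≤ ∑ i ∈ s, L i :=
      Finset.sum_nonneg fun i hi => hL i (Finset.mem_insert_of_mem hi)
    refine (EReal.continuousAt_add (.inr (hLs.trans_lt' EReal.bot_lt_zero).ne')
      (.inl (hLa.trans_lt' EReal.bot_lt_zero).ne')).tendsto.comp
      ((hf a (Finset.mem_insert_self a s)).prodMk_nhds
        (ih (fun i hi => hL i (Finset.mem_insert_of_mem hi))
          fun i hi => hf i (Finset.mem_insert_of_mem hi)))

theorem exists_tendsto_mul_exp_add_mul_exp {P c : ℝ} (Q : ℝ) (hP : 0 ≤ P) (hc : 0 < c) :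
    ∃ L : EReal, 0 ≤ L ∧
      Tendsto (fun t : ℝ => ((P * Real.exp (c * t) + Q * Real.exp (-(c * t)) : ℝ) : EReal))
        atTop (𝓝 L) := by
  have hct : Tendsto (fun t => c * t) atTop atTop := tendsto_id.const_mul_atTop hc
  have hdecay : Tendsto (fun t => Q * Real.exp (-(c * t))) atTop (𝓝 0) := by
    simpa using (Real.tendsto_exp_atBot.comp (tendsto_neg_atTop_atBot.comp hct)).const_mul Q
  rcases hP.eq_or_lt with rfl | hP
  · exact ⟨0, le_rfl, EReal.tendsto_coe.mpr (by simpa using hdecay)⟩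
  · refine ⟨⊤, le_top, EReal.tendsto_coe_nhds_top_iff.mpr ?_⟩
    exact ((Real.tendsto_exp_atTop.comp hct).const_mul_atTop hP).atTop_add hdecay

theorem mul_sinh_add_cosh_eq_exp (l A B t : ℝ) :
    l * ((1/2 : ℝ) * Real.sinh (2 * t * l) * A + Real.cosh (2 * t * l) * B)
      = (|l| * A / 4 + l * B / 2) * Real.exp (2 * |l| * t)
        + (l * B / 2 - |l| * A / 4) * Real.exp (-(2 * |l| * t)) := by
  rcases abs_cases l with ⟨hl, -⟩ | ⟨hl, -⟩ <;>
    rw [hl, Real.sinh_eq, Real.cosh_eq] <;> ring_nf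

theorem exists_tendsto_mul_sinh_add_cosh {A B : ℝ} (l : ℝ) (hB : |B| ≤ A / 2) :
    ∃ L : EReal, 0 ≤ L ∧
      Tendsto (fun t : ℝ =>
        ((l * ((1/2 : ℝ) * Real.sinh (2 * t * l) * A + Real.cosh (2 * t * l) * B) : ℝ) : EReal))
        atTop (𝓝 L) := by
  rcases eq_or_ne l 0 with rfl | hl
  · exact ⟨0, le_rfl, by simp⟩
  have hlB : -(|l| * (A / 2)) ≤ l * B := by
    have := mul_le_mul_of_nonneg_left hB (abs_nonneg l)
    have := neg_abs_le (l * B)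
    rw [abs_mul] at this
    linarith
  simp_rw [mul_sinh_add_cosh_eq_exp]
  exact exists_tendsto_mul_exp_add_mul_exp _ (by linarith) (by positivity)

section

variable {V : Type*} [NormedAddCommGroup V] [InnerProductSpace ℂ V]

theorem abs_im_inner_le (x y : V) : |(⟪x, y⟫_ℂ).im| ≤ (‖x‖ ^ 2 + ‖y‖ ^ 2) / 2 :=
  calc |(⟪x, y⟫_ℂ).im| ≤ ‖⟪x, y⟫_ℂ‖ := Complex.abs_im_le_norm _
    _ ≤ ‖x‖ * ‖y‖ := norm_inner_le_norm x y
    _ ≤ (‖x‖ ^ 2 + ‖y‖ ^ 2) / 2 := by nlinarith [sq_nonneg (‖x‖ - ‖y‖)]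

theorem re_inner_smul_hyperbolic (l θ : ℝ) (x y : V) :
    (⟪((l : ℂ) * Complex.I) • ((Real.cosh θ : ℂ) • x - (Real.sinh θ : ℂ) • (Complex.I • y)),
        (Real.sinh θ : ℂ) • (Complex.I • x) + (Real.cosh θ : ℂ) • y⟫_ℂ).re
      = l * ((1/2 : ℝ) * Real.sinh (2 * θ) * (‖x‖ ^ 2 + ‖y‖ ^ 2)
          + Real.cosh (2 * θ) * (⟪x, y⟫_ℂ).im) := by
  have hnorm (z : V) : ⟪z, z⟫_ℂ = ((‖z‖ ^ 2 : ℝ) : ℂ) := by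
    exact_mod_cast inner_self_eq_norm_sq_to_K z
  simp only [inner_smul_left, inner_sub_left, inner_add_right, inner_smul_right,
    hnorm, ← inner_conj_symm y x]
  simp only [Complex.mul_re, Complex.mul_im, Complex.sub_re, Complex.sub_im, Complex.add_re,
    Complex.conj_re, Complex.conj_im, Complex.I_re, Complex.I_im, Complex.ofReal_re,
    Complex.ofReal_im, map_mul, Complex.conj_ofReal, Complex.conj_I,
    Complex.neg_re, Complex.neg_im]
  rw [Real.sinh_two_mul, Real.cosh_two_mul]
  ring

end

theorem statement8_general
    (V : Type*) [NormedAddCommGroup V] [InnerProductSpace ℂ V]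
    (ι : Type*) [Fintype ι]
    (lam : ι → ℝ) (xc yc : ι → V)
    (ξ : V →ₗ[ℂ] V)
    (heigx : ∀ i, ξ (xc i) = ((lam i : ℂ) * Complex.I) • xc i)
    (heigy : ∀ i, ξ (yc i) = ((lam i : ℂ) * Complex.I) • yc i)
    (horthx : ∀ i j, i ≠ j → ⟪xc i, xc j⟫_ℂ = 0)
    (horthy : ∀ i j, i ≠ j → ⟪yc i, yc j⟫_ℂ = 0)
    (horthxy : ∀ i j, i ≠ j → ⟪xc i, yc j⟫_ℂ = 0)
    -- ω = Im h and the real scalar product ⟨·,·⟩ = Re h :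
    (ω : V → V → ℝ) (hω : ∀ a b, ω a b = (⟪a, b⟫_ℂ).im)
    (sp : V → V → ℝ) (hsp : ∀ a b, sp a b = (⟪a, b⟫_ℂ).re)
    -- the curve (x(t), y(t)) = exp(t J ξ)(x, y):
    (xt yt : ℝ → V)
    (hxt : ∀ t, xt t = ∑ i, ((Real.cosh (t * lam i) : ℂ) • xc i
        - (Real.sinh (t * lam i) : ℂ) • (Complex.I • yc i)))
    (hyt : ∀ t, yt t = ∑ i, ((Real.sinh (t * lam i) : ℂ) • (Complex.I • xc i)
        + (Real.cosh (t * lam i) : ℂ) • yc i)) :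
    (∀ t : ℝ, sp (ξ (xt t)) (yt t)
        = ∑ i, lam i * ((1/2 : ℝ) * Real.sinh (2 * t * lam i) * (‖xc i‖ ^ 2 + ‖yc i‖ ^ 2)
            + Real.cosh (2 * t * lam i) * ω (xc i) (yc i)))
    ∧ (∃ L : EReal, 0 ≤ L ∧
        Tendsto (fun t : ℝ => ((sp (ξ (xt t)) (yt t) : ℝ) : EReal)) atTop (nhds L)) := by
  have horthyx : ∀ i j, i ≠ j → ⟪yc i, xc j⟫_ℂ = 0 := fun i j h => by
    rw [← inner_conj_symm, horthxy j i h.symm, map_zero]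
  have hξ : ∀ t i, ξ ((Real.cosh (t * lam i) : ℂ) • xc i
      - (Real.sinh (t * lam i) : ℂ) • (Complex.I • yc i)) = ((lam i : ℂ) * Complex.I) •
        ((Real.cosh (t * lam i) : ℂ) • xc i - (Real.sinh (t * lam i) : ℂ) • (Complex.I • yc i)) :=
    fun t i => Module.End.mem_eigenspace_iff.mp <|
      Submodule.sub_mem _ (Submodule.smul_mem _ _ (Module.End.mem_eigenspace_iff.mpr (heigx i)))
        (Submodule.smul_mem _ _ <| Submodule.smul_mem _ _ <|
          Module.End.mem_eigenspace_iff.mpr (heigy i))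
  have formula : ∀ t : ℝ, sp (ξ (xt t)) (yt t)
      = ∑ i, lam i * ((1/2 : ℝ) * Real.sinh (2 * t * lam i) * (‖xc i‖ ^ 2 + ‖yc i‖ ^ 2)
          + Real.cosh (2 * t * lam i) * ω (xc i) (yc i)) := by
    intro t
    rw [hsp, hxt, hyt, map_sum, Finset.sum_congr rfl fun i _ => hξ t i, inner_sum_sum_of_ne,
      Complex.re_sum]
    · refine Finset.sum_congr rfl fun i _ => ?_
      rw [re_inner_smul_hyperbolic, hω, mul_assoc 2 t]
    · intro i _ j _ hij
      simp [inner_smul_left, inner_sub_left, inner_add_right, inner_smul_right,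
        horthx i j hij, horthy i j hij, horthxy i j hij, horthyx i j hij]
  choose L hL0 hL using fun i =>
    exists_tendsto_mul_sinh_add_cosh (lam i) ((hω _ _).symm ▸ abs_im_inner_le (xc i) (yc i))
  refine ⟨formula, ∑ i, L i, Finset.sum_nonneg fun i _ => hL0 i, ?_⟩
  simp_rw [formula]
  exact EReal.tendsto_coe_sum_of_nonneg _ _ L (fun i _ => hL0 i) fun i _ => hL i

theorem statement8
    (V : Type*) [NormedAddCommGroup V] [InnerProductSpace ℂ V]
    (ι : Type*) [Fintype ι]
    (lam : ι → ℝ) (xc yc : ι → V)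
    (ξ : V →ₗ[ℂ] V)
    (hskew : ∀ a b : V, ⟪ξ a, b⟫_ℂ = - ⟪a, ξ b⟫_ℂ)
    (heigx : ∀ i, ξ (xc i) = ((lam i : ℂ) * Complex.I) • xc i)
    (heigy : ∀ i, ξ (yc i) = ((lam i : ℂ) * Complex.I) • yc i)
    (horthx : ∀ i j, i ≠ j → ⟪xc i, xc j⟫_ℂ = 0)
    (horthy : ∀ i j, i ≠ j → ⟪yc i, yc j⟫_ℂ = 0)
    (horthxy : ∀ i j, i ≠ j → ⟪xc i, yc j⟫_ℂ = 0)
    -- ω = Im h and the real scalar product ⟨·,·⟩ = Re h :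
    (ω : V → V → ℝ) (hω : ∀ a b, ω a b = (⟪a, b⟫_ℂ).im)
    (sp : V → V → ℝ) (hsp : ∀ a b, sp a b = (⟪a, b⟫_ℂ).re)
    -- the curve (x(t), y(t)) = exp(t J ξ)(x, y):
    (xt yt : ℝ → V)
    (hxt : ∀ t, xt t = ∑ i, ((Real.cosh (t * lam i) : ℂ) • xc i
        - (Real.sinh (t * lam i) : ℂ) • (Complex.I • yc i)))
    (hyt : ∀ t, yt t = ∑ i, ((Real.sinh (t * lam i) : ℂ) • (Complex.I • xc i)
        + (Real.cosh (t * lam i) : ℂ) • yc i)) :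
    (∀ t : ℝ, sp (ξ (xt t)) (yt t)
        = ∑ i, lam i * ((1/2 : ℝ) * Real.sinh (2 * t * lam i) * (‖xc i‖ ^ 2 + ‖yc i‖ ^ 2)
            + Real.cosh (2 * t * lam i) * ω (xc i) (yc i)))
    ∧ (∃ L : EReal, 0 ≤ L ∧
        Tendsto (fun t : ℝ => ((sp (ξ (xt t)) (yt t) : ℝ) : EReal)) atTop (nhds L)) :=
  statement8_general V ι lam xc yc ξ heigx heigy horthx horthy horthxy ω hω sp hsp xt yt hxt hyt
end

section
/- With the above ℂ××ℂ× action on T*ℂ⁴ and the holomorphic symplectic moment map M(x,y,z,w) = √(-1)(x₀z₀ + x₁z₁ - n y₁w₁, y₀w₀ + y₁w₁), the set E ∩ M⁻¹(0), where E = {(0,0,y₀,y₁,z₀,z₁,w₀,w₁) : y₀ ≠ 0 and w₁ ≠ 0}, equals {(0,0,y₀,0,z₀,z₁,0,w₁) : y₀ ≠ 0, w₁ ≠ 0}; moreover every G-orbit in E ∩ M⁻¹(0) meets the slice S = {y₀ = w₁ = 1}, and two points (0,0,1,0,z₀,z₁,0,1) and (0,0,1,0,z₀',z₁',0,1) of S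 lie in the same G-orbit if and only if (z₀',z₁') = ζ(z₀,z₁) for some n-th root of unity ζ. -/
/-!
STATEMENT 12: With the `G = ℂ× × ℂ×` action on `T*ℂ⁴ = ℂ⁸`
`(λ,μ)·(x,y,z,w) = (λx₀,λx₁,μy₀,μλ^{-n}y₁,λ⁻¹z₀,λ⁻¹z₁,μ⁻¹w₀,μ⁻¹λⁿw₁)`
(coordinates `0:x₀,1:x₁,2:y₀,3:y₁,4:z₀,5:z₁,6:w₀,7:w₁`) and the holomorphic
symplectic moment map
`M(x,y,z,w) = √-1 (x₀z₀ + x₁z₁ - n y₁w₁, y₀w₀ + y₁w₁)`: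
(a) `E ∩ M⁻¹(0) = {(0,0,y₀,0,z₀,z₁,0,w₁) : y₀ ≠ 0, w₁ ≠ 0}` where
    `E = {(0,0,y₀,y₁,z₀,z₁,w₀,w₁) : y₀ ≠ 0, w₁ ≠ 0}`;
(b) every `G`-orbit in `E ∩ M⁻¹(0)` meets the slice `S = {y₀ = w₁ = 1}`;
(c) `(0,0,1,0,z₀,z₁,0,1)` and `(0,0,1,0,z₀',z₁',0,1)` lie in the same
    `G`-orbit iff `(z₀',z₁') = ζ (z₀,z₁)` for some `n`-th root of unity `ζ`.
-/

namespace Stmt12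

variable (n : ℕ)

/-- The `ℂ× × ℂ×`-action on `T*ℂ⁴`. -/
noncomputable def act (g : ℂˣ × ℂˣ) (v : Fin 8 → ℂ) : Fin 8 → ℂ :=
  ![(g.1 : ℂ) * v 0, (g.1 : ℂ) * v 1, (g.2 : ℂ) * v 2,
    (g.2 : ℂ) * ((g.1 : ℂ)⁻¹) ^ n * v 3,
    (g.1 : ℂ)⁻¹ * v 4, (g.1 : ℂ)⁻¹ * v 5, (g.2 : ℂ)⁻¹ * v 6,
    (g.2 : ℂ)⁻¹ * (g.1 : ℂ) ^ n * v 7]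

/-- The holomorphic symplectic moment map. -/
noncomputable def M (v : Fin 8 → ℂ) : ℂ × ℂ :=
  (Complex.I * (v 0 * v 4 + v 1 * v 5 - n * (v 3 * v 7)),
   Complex.I * (v 2 * v 6 + v 3 * v 7))

/-- The locus `E` of stable points lying over unstable points of `ℂ⁴`. -/
def E : Set (Fin 8 → ℂ) :=
  { v | v 0 = 0 ∧ v 1 = 0 ∧ v 2 ≠ 0 ∧ v 7 ≠ 0 }

/-- The point `(0,0,1,0,z₀,z₁,0,1)` of the slice `S`. -/
noncomputable def slicePt (z : ℂ × ℂ) : Fin 8 → ℂ :=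
  ![0, 0, 1, 0, z.1, z.2, 0, 1]

end Stmt12

private lemma ext8 (f g : Fin 8 → ℂ) (h0 : f 0 = g 0) (h1 : f 1 = g 1)
    (h2 : f 2 = g 2) (h3 : f 3 = g 3) (h4 : f 4 = g 4) (h5 : f 5 = g 5)
    (h6 : f 6 = g 6) (h7 : f 7 = g 7) : f = g := by
  funext i; fin_cases i <;> assumption

theorem statement12 (n : ℕ) (hn : 0 < n) :
    (Stmt12.E ∩ { v | Stmt12.M n v = 0 }
      = { v : Fin 8 → ℂ | v 0 = 0 ∧ v 1 = 0 ∧ v 3 = 0 ∧ v 6 = 0 ∧ v 2 ≠ 0 ∧ v 7 ≠ 0 })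
    ∧ (∀ v ∈ Stmt12.E ∩ { v | Stmt12.M n v = 0 },
        ∃ g : ℂˣ × ℂˣ, (Stmt12.act n g v) 2 = 1 ∧ (Stmt12.act n g v) 7 = 1)
    ∧ (∀ z z' : ℂ × ℂ,
        (∃ g : ℂˣ × ℂˣ, Stmt12.act n g (Stmt12.slicePt z) = Stmt12.slicePt z')
          ↔ ∃ ζ : ℂ, ζ ^ n = 1 ∧ z'.1 = ζ * z.1 ∧ z'.2 = ζ * z.2) := by
  have hnC : (n : ℂ) ≠ 0 := Nat.cast_ne_zero.mpr hn.ne'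
  refine ⟨?_, ?_, ?_⟩
  · ext v
    simp only [Set.mem_inter_iff, Set.mem_setOf_eq, Stmt12.E, Stmt12.M, Prod.mk_eq_zero]
    constructor
    · rintro ⟨⟨h0, h1, h2, h7⟩, ha, hb⟩
      have ha' : (n : ℂ) * (v 3 * v 7) = 0 := by
        rcases mul_eq_zero.mp ha with h | h
        · exact absurd h Complex.I_ne_zero
        · rw [h0, h1] at h
          simp only [zero_mul, zero_add, add_zero, zero_sub, neg_eq_zero] at h
          exact h
      have h3 : v 3 = 0 :=
        (mul_eq_zero.mp ((mul_eq_zero.mp ha').resolve_left hnC)).resolve_right h7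
      have h6 : v 6 = 0 := by
        rcases mul_eq_zero.mp hb with h | h
        · exact absurd h Complex.I_ne_zero
        · rw [h3] at h
          simp only [zero_mul, add_zero] at h
          exact (mul_eq_zero.mp h).resolve_left h2
      exact ⟨h0, h1, h3, h6, h2, h7⟩
    · rintro ⟨h0, h1, h3, h6, h2, h7⟩
      refine ⟨⟨h0, h1, h2, h7⟩, ?_, ?_⟩ <;> simp [h0, h1, h3, h6]
  · rintro v ⟨⟨h0, h1, h2, h7⟩, -⟩
    obtain ⟨lam, hlam⟩ := IsAlgClosed.exists_pow_nat_eq ((v 2)⁻¹ * (v 7)⁻¹) hn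
    have hlne : lam ≠ 0 := by
      intro h
      rw [h, zero_pow hn.ne'] at hlam
      exact (mul_ne_zero (inv_ne_zero h2) (inv_ne_zero h7)) hlam.symm
    refine ⟨⟨Units.mk0 lam hlne, Units.mk0 (v 2)⁻¹ (inv_ne_zero h2)⟩, ?_, ?_⟩
    · show (v 2)⁻¹ * v 2 = 1
      exact inv_mul_cancel₀ h2
    · show ((v 2)⁻¹)⁻¹ * lam ^ n * v 7 = 1
      rw [hlam, inv_inv]
      field_simp
  · intro z z'
    constructor
    · rintro ⟨g, hg⟩
      have h2 : (g.2 : ℂ) * 1 = 1 := congrFun hg 2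
      have h7 : (g.2 : ℂ)⁻¹ * (g.1 : ℂ) ^ n * 1 = 1 := congrFun hg 7
      have h4 : (g.1 : ℂ)⁻¹ * z.1 = z'.1 := congrFun hg 4
      have h5 : (g.1 : ℂ)⁻¹ * z.2 = z'.2 := congrFun hg 5
      rw [mul_one] at h2 h7
      refine ⟨((g.1 : ℂ))⁻¹, ?_, h4.symm, h5.symm⟩
      rw [inv_pow]
      rw [h2] at h7
      rw [inv_eq_one]
      rwa [inv_one, one_mul] at h7
    · rintro ⟨ζ, hζ, h1, h2⟩
      have hζne : ζ ≠ 0 := fun h => by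
        rw [h, zero_pow hn.ne'] at hζ; exact zero_ne_one hζ
      refine ⟨⟨Units.mk0 ζ⁻¹ (inv_ne_zero hζne), 1⟩, ext8 _ _ ?_ ?_ ?_ ?_ ?_ ?_ ?_ ?_⟩
      · show ζ⁻¹ * 0 = 0; exact mul_zero _
      · show ζ⁻¹ * 0 = 0; exact mul_zero _
      · show ((1 : ℂˣ) : ℂ) * 1 = 1; simp
      · show ((1 : ℂˣ) : ℂ) * (ζ⁻¹)⁻¹ ^ n * 0 = 0; exact mul_zero _
      · show (ζ⁻¹)⁻¹ * z.1 = z'.1; rw [inv_inv, h1]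
      · show (ζ⁻¹)⁻¹ * z.2 = z'.2; rw [inv_inv, h2]
      · show ((1 : ℂˣ) : ℂ)⁻¹ * 0 = 0; exact mul_zero _
      · show ((1 : ℂˣ) : ℂ)⁻¹ * (ζ⁻¹) ^ n * 1 = 1
        simp [inv_pow, hζ]
end

section
/- Let 𝔱 be a finite-dimensional real inner product space, β¹,…,β^m ∈ 𝔱*, and let sequences ξ_n ∈ 𝔱 and bounded sequences (v_n^i) ∈ ℂ be given. Suppose A := { i : exp(-2β^i(ξ_n))|v_n^i|² is unbounded } is nonempty and for all i ∈ A, exp(-2β^i(ξ_n))|v_n^i|² → +∞. Then β^i(ξ_n) → -∞ for every i ∈ A, and consequently there exists a unit vector η ∈ 𝔱 with β^i(η) < 0 for all i ∈ A. -/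
/-!
A bounded factor cannot make `exp (-2 β^i(ξ_n)) |v_n^i|²` blow up, so the exponential factor
itself must, i.e. `β^i(ξ_n) → -∞`. With finitely many `i ∈ A`, some single `ξ_n` then makes all
`β^i(ξ_n)` negative, and normalising it gives `η`.
-/

open Filter

theorem Filter.Tendsto.of_exp_mul_le {α : Type*} {l : Filter α} {a b : α → ℝ} {C : ℝ}
    (hb : ∀ᶠ x in l, b x ≤ C) (h : Tendsto (fun x => Real.exp (a x) * b x) l atTop) :
    Tendsto a l atTop := by
  set D := max C 1
  have hD : 0 < D := lt_of_lt_of_le one_pos (le_max_right _ _)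
  have hexp : Tendsto (fun x => Real.exp (a x)) l atTop := by
    refine tendsto_atTop_mono' l ?_ (h.atTop_div_const hD)
    filter_upwards [hb] with x hx
    rw [div_le_iff₀ hD]
    exact mul_le_mul_of_nonneg_left (hx.trans (le_max_left _ _)) (Real.exp_nonneg _)
  exact Real.tendsto_exp_comp_atTop.mp hexp

theorem exists_norm_eq_one_forall_neg {E ι : Type*} [NormedAddCommGroup E] [NormedSpace ℝ E]
    {f : ι → E →ₗ[ℝ] ℝ} {s : Set ι} (hs : s.Nonempty) {x : E} (hx : ∀ i ∈ s, f i x < 0) :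
    ∃ η : E, ‖η‖ = 1 ∧ ∀ i ∈ s, f i η < 0 := by
  obtain ⟨i₀, hi₀⟩ := hs
  have hx₀ : x ≠ 0 := by
    rintro rfl
    simpa using hx i₀ hi₀
  refine ⟨(‖x‖⁻¹ : ℝ) • x, norm_smul_inv_norm hx₀, fun i hi => ?_⟩
  rw [map_smul, smul_eq_mul]
  exact mul_neg_of_pos_of_neg (inv_pos.mpr (norm_pos_iff.mpr hx₀)) (hx i hi)

theorem exists_norm_eq_one_forall_neg_of_tendsto_atBot {E ι : Type*} [NormedAddCommGroup E]
    [NormedSpace ℝ E] {f : ι → E →ₗ[ℝ] ℝ} {s : Set ι} (hfin : s.Finite) (hs : s.Nonempty)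
    {α : Type*} {l : Filter α} [l.NeBot] {ξ : α → E}
    (h : ∀ i ∈ s, Tendsto (fun n => f i (ξ n)) l atBot) :
    ∃ η : E, ‖η‖ = 1 ∧ ∀ i ∈ s, f i η < 0 := by
  have hneg : ∀ᶠ n in l, ∀ i ∈ s, f i (ξ n) < 0 :=
    hfin.eventually_all.mpr fun i hi => (h i hi).eventually (eventually_lt_atBot 0)
  obtain ⟨n, hn⟩ := hneg.exists
  exact exists_norm_eq_one_forall_neg hs hn

theorem statement14_general
    (𝔱 : Type*) [NormedAddCommGroup 𝔱] [InnerProductSpace ℝ 𝔱]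
    (m : ℕ) (β : Fin m → (𝔱 →ₗ[ℝ] ℝ))
    (ξ : ℕ → 𝔱) (v : Fin m → ℕ → ℂ)
    (hbdd : ∀ i, ∃ C : ℝ, ∀ n, ‖v i n‖ ≤ C)
    (A : Set (Fin m))
    (hAne : A.Nonempty)
    (hAtop : ∀ i ∈ A, Tendsto (fun n =>
        Real.exp (-2 * β i (ξ n)) * ‖v i n‖ ^ 2) atTop atTop) :
    (∀ i ∈ A, Tendsto (fun n => β i (ξ n)) atTop atBot)
    ∧ (∃ η : 𝔱, ‖η‖ = 1 ∧ ∀ i ∈ A, β i η < 0) := by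
  have hbot : ∀ i ∈ A, Tendsto (fun n => β i (ξ n)) atTop atBot := by
    intro i hi
    obtain ⟨C, hC⟩ := hbdd i
    have hsq : ∀ᶠ n in atTop, ‖v i n‖ ^ 2 ≤ C ^ 2 :=
      Eventually.of_forall fun n => pow_le_pow_left₀ (norm_nonneg _) (hC n) 2
    exact (tendsto_const_mul_atTop_of_neg (by norm_num : (-2 : ℝ) < 0)).mp
      ((hAtop i hi).of_exp_mul_le hsq)
  exact ⟨hbot, exists_norm_eq_one_forall_neg_of_tendsto_atBot A.toFinite hAne hbot⟩

theorem statement14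
    (𝔱 : Type*) [NormedAddCommGroup 𝔱] [InnerProductSpace ℝ 𝔱] [FiniteDimensional ℝ 𝔱]
    (m : ℕ) (β : Fin m → (𝔱 →ₗ[ℝ] ℝ))
    (ξ : ℕ → 𝔱) (v : Fin m → ℕ → ℂ)
    (hbdd : ∀ i, ∃ C : ℝ, ∀ n, ‖v i n‖ ≤ C)
    (A : Set (Fin m))
    (hA : A = { i | ¬ BddAbove (Set.range fun n =>
        Real.exp (-2 * β i (ξ n)) * ‖v i n‖ ^ 2) })
    (hAne : A.Nonempty)
    (hAtop : ∀ i ∈ A, Tendsto (fun n =>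
        Real.exp (-2 * β i (ξ n)) * ‖v i n‖ ^ 2) atTop atTop) :
    (∀ i ∈ A, Tendsto (fun n => β i (ξ n)) atTop atBot)
    ∧ (∃ η : 𝔱, ‖η‖ = 1 ∧ ∀ i ∈ A, β i η < 0) :=
  statement14_general 𝔱 m β ξ v hbdd A hAne hAtop
end
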